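/- arXiv:1504.01294 — 2 statements merged into one kernel-verified Lean document; each statement's English description precedes it below -/
import Mathlib

section
/- Let p_1,...,p_K > 0 with Σ p_k = 1, and for ν ≥ 1 define p_k^{(ν)} = p_k^ν / Σ_j p_j^ν. Then for every k, the map ν ↦ Σ_k p_k^{(ν)} d_k is nonincreasing in ν whenever (d_k) and (p_k) are inversely ordered (p_i ≥ p_j iff d_i ≤ d_j). -/
theorem stmt_10 (K : ℕ) (p d : Fin K → ℝ) (hp : ∀ k, 0 < p k) (hsum : (∑ k, p k) = 1)
    (hd : ∀ k, 0 < d k)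
    (hinv : ∀ i j : Fin K, p i ≥ p j ↔ d i ≤ d j) :
    ∀ ν₁ ν₂ : ℝ, 1 ≤ ν₁ → ν₁ ≤ ν₂ →
      (∑ k, (p k ^ ν₂ / ∑ j, p j ^ ν₂) * d k) ≤
      (∑ k, (p k ^ ν₁ / ∑ j, p j ^ ν₁) * d k) := by
  intro ν₁ ν₂ hν₁ hν₁₂
  rcases Nat.eq_zero_or_pos K with hK | hK
  · subst hK; simp at hsum
  have hne : Nonempty (Fin K) := Fin.pos_iff_nonempty.mp hK
  set S₁ : ℝ := ∑ j, p j ^ ν₁ with hS₁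
  set S₂ : ℝ := ∑ j, p j ^ ν₂ with hS₂
  have hS₁pos : 0 < S₁ := Finset.sum_pos (fun j _ => Real.rpow_pos_of_pos (hp j) ν₁)
    Finset.univ_nonempty
  have hS₂pos : 0 < S₂ := Finset.sum_pos (fun j _ => Real.rpow_pos_of_pos (hp j) ν₂)
    Finset.univ_nonempty
  set A : ℝ := ∑ k, p k ^ ν₂ * d k with hA
  set B : ℝ := ∑ k, p k ^ ν₁ * d k with hB
  have hgoal : A * S₁ ≤ B * S₂ := by
    -- f i j ≤ 0 for all i j
    have hf : ∀ i j : Fin K,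
        (p i ^ ν₂ * p j ^ ν₁ - p i ^ ν₁ * p j ^ ν₂) * (d i - d j) ≤ 0 := by
      have key : ∀ i j : Fin K, p j ≤ p i →
          (p i ^ ν₂ * p j ^ ν₁ - p i ^ ν₁ * p j ^ ν₂) * (d i - d j) ≤ 0 := by
        intro i j hpij
        have hdij : d i ≤ d j := (hinv i j).mp hpij
        have h1 : p i ^ ν₁ * p j ^ ν₂ ≤ p i ^ ν₂ * p j ^ ν₁ := by
          have e1 : p i ^ ν₂ = p i ^ ν₁ * p i ^ (ν₂ - ν₁) := by
            rw [← Real.rpow_add (hp i)]; ring_nf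
          have e2 : p j ^ ν₂ = p j ^ ν₁ * p j ^ (ν₂ - ν₁) := by
            rw [← Real.rpow_add (hp j)]; ring_nf
          rw [e1, e2]
          have h2 : p j ^ (ν₂ - ν₁) ≤ p i ^ (ν₂ - ν₁) :=
            Real.rpow_le_rpow (hp j).le hpij (by linarith)
          have := mul_le_mul_of_nonneg_left h2
            (mul_nonneg (Real.rpow_pos_of_pos (hp i) ν₁).le
              (Real.rpow_pos_of_pos (hp j) ν₁).le)
          calc p i ^ ν₁ * (p j ^ ν₁ * p j ^ (ν₂ - ν₁))
              = p i ^ ν₁ * p j ^ ν₁ * p j ^ (ν₂ - ν₁) := by ring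
            _ ≤ p i ^ ν₁ * p j ^ ν₁ * p i ^ (ν₂ - ν₁) := this
            _ = p i ^ ν₁ * p i ^ (ν₂ - ν₁) * p j ^ ν₁ := by ring
        exact mul_nonpos_of_nonneg_of_nonpos (by linarith) (by linarith)
      intro i j
      rcases le_total (p j) (p i) with h | h
      · exact key i j h
      · have := key j i h
        nlinarith [this]
    have hsumf : ∑ i, ∑ j, (p i ^ ν₂ * p j ^ ν₁ - p i ^ ν₁ * p j ^ ν₂) * (d i - d j)
        = 2 * (A * S₁ - B * S₂) := by
      have : ∀ i : Fin K, ∑ j, (p i ^ ν₂ * p j ^ ν₁ - p i ^ ν₁ * p j ^ ν₂) * (d i - d j)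
          = (p i ^ ν₂ * d i) * S₁ - p i ^ ν₂ * B - (p i ^ ν₁ * d i) * S₂ + p i ^ ν₁ * A := by
        intro i
        rw [hS₁, hS₂, hA, hB, Finset.mul_sum, Finset.mul_sum, Finset.mul_sum,
          Finset.mul_sum]
        rw [← Finset.sum_sub_distrib, ← Finset.sum_sub_distrib, ← Finset.sum_add_distrib]
        apply Finset.sum_congr rfl
        intro j _
        ring
      rw [Finset.sum_congr rfl (fun i _ => this i)]
      rw [Finset.sum_add_distrib, Finset.sum_sub_distrib, Finset.sum_sub_distrib,
        ← Finset.sum_mul, ← Finset.sum_mul, ← Finset.sum_mul, ← Finset.sum_mul]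
      rw [← hA, ← hB, ← hS₁, ← hS₂]
      ring
    have hle : ∑ i, ∑ j, (p i ^ ν₂ * p j ^ ν₁ - p i ^ ν₁ * p j ^ ν₂) * (d i - d j) ≤ 0 :=
      Finset.sum_nonpos (fun i _ => Finset.sum_nonpos (fun j _ => hf i j))
    rw [hsumf] at hle
    linarith
  have l1 : (∑ k, (p k ^ ν₂ / S₂) * d k) = A / S₂ := by
    rw [hA, Finset.sum_div]
    apply Finset.sum_congr rfl
    intro k _; ring
  have l2 : (∑ k, (p k ^ ν₁ / S₁) * d k) = B / S₁ := by
    rw [hB, Finset.sum_div]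
    apply Finset.sum_congr rfl
    intro k _; ring
  rw [l1, l2, div_le_div_iff₀ hS₂pos hS₁pos]
  exact hgoal
end

section
/- Let x_1,...,x_N ∈ ℝⁿ with weights w_i > 0 and let c_1,...,c_K and c_1',...,c_K' be two sets of centers. Define D(X; c) = Σ_i min over the simplex of Σ_k w_i p_k² d_1(x_i, c_k). If the centers c' are obtained from c by first computing optimal probabilities p_k(x_i) for centers c, and then choosing each c_k' to minimize Σ_i w_i p_k(x_i)² d_1(x_i, c_k), then D(X; c') ≤ D(X; c). -/
theorem stmt_13 (N n K : ℕ) (x : Fin N → Fin n → ℝ) (w : Fin N → ℝ) (hw : ∀ i, 0 < w i)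
    (c c' : Fin K → Fin n → ℝ)
    (p : Fin N → Fin K → ℝ)
    (hp0 : ∀ i k, 0 ≤ p i k) (hp1 : ∀ i, (∑ k, p i k) = 1)
    (hpopt : ∀ i, ∀ q : Fin K → ℝ, (∀ k, 0 ≤ q k) → (∑ k, q k) = 1 →
      w i * ∑ k, p i k ^ 2 * (∑ j, |x i j - c k j|) ≤
        w i * ∑ k, q k ^ 2 * (∑ j, |x i j - c k j|))
    (hcopt : ∀ k, ∀ cc : Fin n → ℝ,
      (∑ i, w i * p i k ^ 2 * (∑ j, |x i j - c' k j|)) ≤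
        (∑ i, w i * p i k ^ 2 * (∑ j, |x i j - cc j|))) :
    (∑ i, sInf {v : ℝ | ∃ q : Fin K → ℝ, (∀ k, 0 ≤ q k) ∧ (∑ k, q k) = 1 ∧
        v = w i * ∑ k, q k ^ 2 * (∑ j, |x i j - c' k j|)}) ≤
    (∑ i, sInf {v : ℝ | ∃ q : Fin K → ℝ, (∀ k, 0 ≤ q k) ∧ (∑ k, q k) = 1 ∧
        v = w i * ∑ k, q k ^ 2 * (∑ j, |x i j - c k j|)}) := by
  have step1 : (∑ i, sInf {v : ℝ | ∃ q : Fin K → ℝ, (∀ k, 0 ≤ q k) ∧ (∑ k, q k) = 1 ∧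
        v = w i * ∑ k, q k ^ 2 * (∑ j, |x i j - c' k j|)}) ≤
      ∑ i, w i * ∑ k, p i k ^ 2 * (∑ j, |x i j - c' k j|) := by
    apply Finset.sum_le_sum
    intro i _
    apply csInf_le
    · refine ⟨0, ?_⟩
      rintro v ⟨q, hq0, hq1, rfl⟩
      have : 0 ≤ ∑ k, q k ^ 2 * (∑ j, |x i j - c' k j|) := by
        apply Finset.sum_nonneg
        intro k _
        exact mul_nonneg (sq_nonneg _) (Finset.sum_nonneg fun j _ => abs_nonneg _)
      exact mul_nonneg (hw i).le this
    · exact ⟨p i, hp0 i, hp1 i, rfl⟩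
  have step2 : (∑ i, w i * ∑ k, p i k ^ 2 * (∑ j, |x i j - c' k j|)) ≤
      ∑ i, w i * ∑ k, p i k ^ 2 * (∑ j, |x i j - c k j|) := by
    have h1 : ∀ (d : Fin K → Fin n → ℝ),
        (∑ i, w i * ∑ k, p i k ^ 2 * (∑ j, |x i j - d k j|)) =
        ∑ k, ∑ i, w i * p i k ^ 2 * (∑ j, |x i j - d k j|) := by
      intro d
      rw [Finset.sum_comm]
      congr 1; ext i
      rw [Finset.mul_sum]
      congr 1; ext k
      ring
    rw [h1, h1]
    exact Finset.sum_le_sum fun k _ => hcopt k (c k)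
  have step3 : (∑ i, w i * ∑ k, p i k ^ 2 * (∑ j, |x i j - c k j|)) ≤
      (∑ i, sInf {v : ℝ | ∃ q : Fin K → ℝ, (∀ k, 0 ≤ q k) ∧ (∑ k, q k) = 1 ∧
        v = w i * ∑ k, q k ^ 2 * (∑ j, |x i j - c k j|)}) := by
    apply Finset.sum_le_sum
    intro i _
    refine le_csInf ⟨w i * ∑ k, p i k ^ 2 * (∑ j, |x i j - c k j|), p i, hp0 i, hp1 i, rfl⟩ ?_
    rintro v ⟨q, hq0, hq1, rfl⟩
    exact hpopt i q hq0 hq1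
  linarith
end
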